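/- Let n ≥ k ≥ 1, d = 2^n, γ = 3/4, ν = 1/2, and define α_k := [d²(d+3)(dγ^k + 3ν^k) − 4(d+1)(d+2)] / [(d²−1)(d+2)(d+4)] and β_k := [d²(d²γ^k − 4) + 4] / [(d²−1)(d²−4)] for d > 2, with β₁ := (3d²−4)/(4(d²−1)) = 2/3 when d = 2. Then: (i) α_k and β_k are monotonically increasing in d (over d = 2^n with n ≥ k) and monotonically decreasing in k; (ii) α_k → γ^k and β_k → γ^k as d → ∞, and 0 < α_k < γ^k, 0 < β_k < γ^k; (iii) for every integer l ≥ 0, γ^{kl}·[1 − kl(3d+1)/(3(d²−1))] ≤ α₁^{kl} ≤ α_k^l ≤ β_k^l ≤ β₁^{kl} ≤ α₁^{kl} + (kld/(d²−1))·γ^{kl}. -/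

import Mathlib

/-!
Write `α_k = A(d, γ^k, ν^k)` and `β_k = B(d, γ^k)` for two explicit rational functions `A`, `B`.
Partial fractions exhibit `A(d, g, y)` and `B(d, g)` as `g` minus nonnegative combinations of
functions decreasing in `d`, which gives monotonicity in `d` and the upper bounds; clearing
denominators turns positivity, `α_k ≤ β_k` and the one-step inequalities `α₁ α_k ≤ α_{k+1}`,
`β_{k+1} ≤ β₁ β_k` into polynomial inequalities, where `k ≤ n` enters only through
`ν^k ≤ (2/3)^k γ^k` and `γ^k d ≥ (3/2)^k`. The chain (iii) then follows from
`α₁ = γ (1 - (3d+1)/(3(d²-1)))` and Bernoulli's inequality on the left, and from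
`β₁ - α₁ = 3d/(4(d²-1))` and `x^m - y^m ≤ m γ^(m-1) (x - y)` for `y ≤ x ≤ γ` on the right.
-/

open Filter
open scoped Topology

noncomputable section

namespace ThriftyShadow

/-- the dimension `d = 2^n` as a real number -/
def dimR (n : ℕ) : ℝ := 2 ^ n

/-- the decay coefficient `α_k` for the interleaved Clifford–T ensemble with
`n` qubits and `k` T gates per layer -/
def alphaCoef (n k : ℕ) : ℝ :=
  ((dimR n) ^ 2 * (dimR n + 3) * (dimR n * (3 / 4 : ℝ) ^ k + 3 * (1 / 2 : ℝ) ^ k)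
      - 4 * (dimR n + 1) * (dimR n + 2))
    / (((dimR n) ^ 2 - 1) * (dimR n + 2) * (dimR n + 4))

/-- the decay coefficient `β_k`; for `d = 2` (i.e. `n = 1`, which forces `k = 1`)
it is defined by its limiting value `(3d²−4)/(4(d²−1))` -/
def betaCoef (n k : ℕ) : ℝ :=
  if n = 1 then (3 * (dimR n) ^ 2 - 4) / (4 * ((dimR n) ^ 2 - 1))
  else ((dimR n) ^ 2 * ((dimR n) ^ 2 * (3 / 4 : ℝ) ^ k - 4) + 4)
        / (((dimR n) ^ 2 - 1) * ((dimR n) ^ 2 - 4))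

lemma mul_pow_sub_pow_le {x y c : ℝ} (hy : 0 ≤ y) (hyx : y ≤ x) (hxc : x ≤ c) :
    ∀ m : ℕ, c * (x ^ m - y ^ m) ≤ m * c ^ m * (x - y)
  | 0 => by simp
  | m + 1 => by
    have ih := mul_pow_sub_pow_le hy hyx hxc m
    have hym : y ^ m ≤ c ^ m := pow_le_pow_left₀ hy (hyx.trans hxc) m
    have hc : 0 ≤ c := hy.trans (hyx.trans hxc)
    have : 0 ≤ x - y := sub_nonneg.mpr hyx
    have : 0 ≤ c * (x ^ m - y ^ m) := mul_nonneg hc (sub_nonneg.mpr (pow_le_pow_left₀ hy hyx m))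
    calc c * (x ^ (m + 1) - y ^ (m + 1))
        = x * (c * (x ^ m - y ^ m)) + c * y ^ m * (x - y) := by ring
      _ ≤ c * (m * c ^ m * (x - y)) + c * c ^ m * (x - y) := by gcongr
      _ = (m + 1 : ℕ) * c ^ (m + 1) * (x - y) := by push_cast; ring

def alphaRat (d g y : ℝ) : ℝ :=
  (d ^ 2 * (d + 3) * (d * g + 3 * y) - 4 * (d + 1) * (d + 2)) / ((d ^ 2 - 1) * (d + 2) * (d + 4))

def betaRat (d g : ℝ) : ℝ :=
  (d ^ 2 * (d ^ 2 * g - 4) + 4) / ((d ^ 2 - 1) * (d ^ 2 - 4))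

section RationalFunctions

variable {d g y : ℝ}

lemma alphaRat_den_pos (hd : 1 < d) : 0 < (d ^ 2 - 1) * (d + 2) * (d + 4) :=
  mul_pos (mul_pos (by nlinarith) (by linarith)) (by linarith)

lemma betaRat_den_pos (hd : 2 < d) : 0 < (d ^ 2 - 1) * (d ^ 2 - 4) :=
  mul_pos (by nlinarith) (by nlinarith)

/- `alphaRat d g y` is affine in `(g, y)`; with weights `(4g - 6y)/3`, `2y`, `1 - 4g/3` summing to
one it interpolates between `alphaRat d (3/4) 0`, `alphaRat d (3/4) (1/2)` and `alphaRat d 0 0`,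
each of which is `3/4` minus a decreasing function of `d`. -/
lemma alphaRat_eq (hd : 1 < d) :
    alphaRat d g y = g
      - (4 * g - 6 * y) / 3
          * (9 / (20 * (d - 1)) + 1 / (2 * (d ^ 2 - 1)) + 1 / (d + 2) + 4 / (5 * (d + 4)))
      - 2 * y * (1 / (2 * (d - 1)) + 1 / (4 * (d + 1)))
      - (1 - 4 * g / 3) * (4 / ((d - 1) * (d + 4))) := by
  have h₁ : d - 1 ≠ 0 := by linarith
  have h₂ : d + 1 ≠ 0 := by linarith
  have h₃ : d + 2 ≠ 0 := by linarith
  have h₄ : d + 4 ≠ 0 := by linarith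
  have h₅ : d ^ 2 - 1 ≠ 0 := by nlinarith
  unfold alphaRat
  field_simp
  ring

lemma betaRat_eq (hd : 2 < d) :
    betaRat d g = g - g / (3 * (d ^ 2 - 1)) - 4 * (3 - 4 * g) / (3 * (d ^ 2 - 4)) := by
  have h₁ : d ^ 2 - 1 ≠ 0 := by nlinarith
  have h₄ : d ^ 2 - 4 ≠ 0 := by nlinarith
  unfold betaRat
  field_simp
  ring

lemma alphaRat_monotoneOn (hy : 0 ≤ y) (hgy : 3 * y ≤ 2 * g) (hg : g ≤ 3 / 4) :
    MonotoneOn (fun d => alphaRat d g y) (Set.Ioi 1) := by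
  intro a ha b hb hab
  dsimp only
  rw [alphaRat_eq ha, alphaRat_eq hb]
  have : 0 ≤ (4 * g - 6 * y) / 3 := by linarith
  have : 0 ≤ 1 - 4 * g / 3 := by linarith
  gcongr <;> nlinarith [Set.mem_Ioi.mp ha]

lemma betaRat_monotoneOn (hg₀ : 0 ≤ g) (hg : g ≤ 3 / 4) :
    MonotoneOn (fun d => betaRat d g) (Set.Ioi 2) := by
  intro a ha b hb hab
  dsimp only
  rw [betaRat_eq ha, betaRat_eq hb]
  have : 0 < a ^ 2 - 4 := by nlinarith [Set.mem_Ioi.mp ha]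
  gcongr <;> nlinarith [Set.mem_Ioi.mp ha]

lemma alphaRat_lt (hd : 1 < d) (hy : 0 < y) (hgy : 3 * y ≤ 2 * g) (hg : g ≤ 3 / 4) :
    alphaRat d g y < g := by
  have : 0 < d - 1 := sub_pos.mpr hd
  have : 0 < d ^ 2 - 1 := by nlinarith
  have : 0 < d + 1 := by linarith
  have : 0 < d + 2 := by linarith
  have : 0 < d + 4 := by linarith
  have : 0 ≤ (4 * g - 6 * y) / 3 := by linarith
  have : 0 ≤ 1 - 4 * g / 3 := by linarith
  rw [alphaRat_eq hd, sub_sub, sub_sub, sub_lt_self_iff]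
  positivity

lemma betaRat_lt (hd : 2 < d) (hg₀ : 0 < g) (hg : g ≤ 3 / 4) : betaRat d g < g := by
  have : 0 < d ^ 2 - 1 := by nlinarith
  have : 0 < d ^ 2 - 4 := by nlinarith
  have : 0 ≤ 3 - 4 * g := by linarith
  rw [betaRat_eq hd, sub_sub, sub_lt_self_iff]
  positivity

lemma alphaRat_pos (hd : 2 ≤ d) (hgd : 3 / 2 ≤ g * d) (hyd : 1 ≤ y * d) : 0 < alphaRat d g y := by
  refine div_pos ?_ (alphaRat_den_pos (by linarith))
  nlinarith [mul_le_mul_of_nonneg_right hgd (by nlinarith : (0:ℝ) ≤ d ^ 2 * (d + 3)),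
    mul_le_mul_of_nonneg_right hyd (by nlinarith : (0:ℝ) ≤ 3 * d * (d + 3))]

lemma betaRat_pos (hd : 2 < d) (hgd : 4 ≤ g * d ^ 2) : 0 < betaRat d g :=
  div_pos (by nlinarith) (betaRat_den_pos hd)

lemma alphaRat_le_alphaRat {g' y' : ℝ} (hd : 1 < d) (hg : g ≤ g') (hy : y ≤ y') :
    alphaRat d g y ≤ alphaRat d g' y' := by
  unfold alphaRat
  have : 0 < d := by linarith
  gcongr
  exact (alphaRat_den_pos hd).le

lemma betaRat_le_betaRat {g' : ℝ} (hd : 2 < d) (hg : g ≤ g') : betaRat d g ≤ betaRat d g' := by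
  unfold betaRat
  gcongr
  exact (betaRat_den_pos hd).le

lemma alphaRat_le_betaRat (hd : 2 < d) (hgy : 3 * y ≤ 2 * g) (hgd : 3 / 2 ≤ g * d) :
    alphaRat d g y ≤ betaRat d g := by
  have h₁ : d ^ 2 - 1 ≠ 0 := by nlinarith
  have h₄ : d ^ 2 - 4 ≠ 0 := by nlinarith
  have key : betaRat d g - alphaRat d g y
      = (3 * g * d ^ 3 * (d + 2) - 3 * y * d ^ 2 * (d + 3) * (d - 2) - 12 * d * (d + 1))
        / ((d + 4) * ((d ^ 2 - 1) * (d ^ 2 - 4))) := by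
    have : d + 2 ≠ 0 := by linarith
    have : d + 4 ≠ 0 := by linarith
    unfold alphaRat betaRat
    field_simp
    ring
  have : 0 ≤ d - 2 := by linarith
  -- `3y ≤ 2g` and `gd ≥ 3/2` bound the numerator below by `(3/2) d (d - 2)²`
  have hnum :
      0 ≤ 3 * g * d ^ 3 * (d + 2) - 3 * y * d ^ 2 * (d + 3) * (d - 2) - 12 * d * (d + 1) := by
    nlinarith [mul_le_mul_of_nonneg_right hgy (by positivity : (0:ℝ) ≤ d ^ 2 * (d + 3) * (d - 2)),
      mul_le_mul_of_nonneg_right hgd (by nlinarith : (0:ℝ) ≤ d * (d ^ 2 + 4 * d + 12)),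
      mul_nonneg (by linarith : (0:ℝ) ≤ d) (sq_nonneg (d - 2))]
  rw [← sub_nonneg, key]
  exact div_nonneg hnum (mul_pos (by linarith) (betaRat_den_pos hd)).le

lemma alphaRat_three_quarters_half (hd : 1 < d) :
    alphaRat d (3 / 4) (1 / 2) = 3 / 4 - (3 * d + 1) / (4 * (d ^ 2 - 1)) := by
  rw [alphaRat_eq hd]
  have : d - 1 ≠ 0 := by linarith
  have : d + 1 ≠ 0 := by linarith
  have : d ^ 2 - 1 ≠ 0 := by nlinarith
  field_simp
  ring

lemma betaRat_three_quarters (hd : 2 < d) :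
    betaRat d (3 / 4) = 3 / 4 - 1 / (4 * (d ^ 2 - 1)) := by
  have : d ^ 2 - 1 ≠ 0 := by nlinarith
  rw [betaRat_eq hd]
  field_simp
  ring

lemma alphaRat_mul_le (hd : 1 < d)
    (hE : 0 ≤ g * d ^ 2 * (3 * d + 1) - 3 * y * d * (d ^ 2 - 3 * d - 2) - 4 * (d + 1) * (d + 2)) :
    alphaRat d (3 / 4) (1 / 2) * alphaRat d g y ≤ alphaRat d (3 / 4 * g) (1 / 2 * y) := by
  have h₁ : 0 < d ^ 2 - 1 := by nlinarith
  have key : alphaRat d (3 / 4 * g) (1 / 2 * y) - alphaRat d (3 / 4) (1 / 2) * alphaRat d g y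
      = d * (d + 3) * (g * d ^ 2 * (3 * d + 1) - 3 * y * d * (d ^ 2 - 3 * d - 2)
          - 4 * (d + 1) * (d + 2)) / (4 * (d ^ 2 - 1) * ((d ^ 2 - 1) * (d + 2) * (d + 4))) := by
    have : d + 2 ≠ 0 := by linarith
    have : d + 4 ≠ 0 := by linarith
    rw [alphaRat_three_quarters_half hd]
    unfold alphaRat
    field_simp
    ring
  rw [← sub_nonneg, key]
  have : 0 ≤ d * (d + 3) := mul_nonneg (by linarith) (by linarith)
  exact div_nonneg (mul_nonneg this hE) (mul_pos (by linarith) (alphaRat_den_pos hd)).le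

lemma betaRat_le_mul (hd : 2 < d) (hg : g ≤ 3 / 4) :
    betaRat d (3 / 4 * g) ≤ betaRat d (3 / 4) * betaRat d g := by
  have h₁ : 0 < d ^ 2 - 1 := by nlinarith
  have key : betaRat d (3 / 4) * betaRat d g - betaRat d (3 / 4 * g)
      = d ^ 2 * (4 * (d ^ 2 - 1) - g * d ^ 2)
        / (4 * (d ^ 2 - 1) * ((d ^ 2 - 1) * (d ^ 2 - 4))) := by
    have : d ^ 2 - 4 ≠ 0 := by nlinarith
    rw [betaRat_three_quarters hd]
    unfold betaRat
    field_simp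
    ring
  rw [← sub_nonneg, key]
  have : 0 ≤ 4 * (d ^ 2 - 1) - g * d ^ 2 := by nlinarith
  exact div_nonneg (mul_nonneg (sq_nonneg d) this) (mul_pos (by linarith) (betaRat_den_pos hd)).le

end RationalFunctions

lemma dimR_mono : Monotone dimR := fun _ _ h => pow_le_pow_right₀ one_le_two h

lemma two_le_dimR {n : ℕ} (hn : 1 ≤ n) : 2 ≤ dimR n := by
  simpa [dimR] using dimR_mono hn

lemma four_le_dimR {n : ℕ} (hn : 2 ≤ n) : 4 ≤ dimR n :=
  (by norm_num [dimR] : (4 : ℝ) = dimR 2).trans_le (dimR_mono hn)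

lemma half_pow_le {j k : ℕ} (h : j ≤ k) : (1 / 2 : ℝ) ^ k ≤ (2 / 3) ^ j * (3 / 4) ^ k :=
  calc (1 / 2 : ℝ) ^ k = (2 / 3) ^ k * (3 / 4) ^ k := by rw [← mul_pow]; norm_num
    _ ≤ (2 / 3) ^ j * (3 / 4) ^ k :=
        mul_le_mul_of_nonneg_right (pow_le_pow_of_le_one (by norm_num) (by norm_num) h)
          (by positivity)

lemma three_halves_pow_mul_two_pow_le {j k n : ℕ} (h : k + j ≤ n) :
    (3 / 2 : ℝ) ^ k * 2 ^ j ≤ (3 / 4) ^ k * dimR n :=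
  calc (3 / 2 : ℝ) ^ k * 2 ^ j = (3 / 4) ^ k * dimR (k + j) := by
        rw [dimR, pow_add, ← mul_assoc, ← mul_pow]; norm_num
    _ ≤ (3 / 4) ^ k * dimR n := by gcongr; exact dimR_mono h

lemma three_halves_le_mul_dimR {k n : ℕ} (hk : 1 ≤ k) (hkn : k ≤ n) :
    3 / 2 ≤ (3 / 4 : ℝ) ^ k * dimR n :=
  calc (3 / 2 : ℝ) ≤ (3 / 2) ^ k * 2 ^ 0 := by
        rw [pow_zero, mul_one]
        exact le_self_pow₀ (by norm_num) (by omega)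
    _ ≤ (3 / 4) ^ k * dimR n := three_halves_pow_mul_two_pow_le hkn

lemma one_le_half_pow_mul_dimR {k n : ℕ} (h : k ≤ n) : 1 ≤ (1 / 2 : ℝ) ^ k * dimR n :=
  calc (1 : ℝ) = (1 / 2) ^ k * dimR k := by rw [dimR, ← mul_pow]; norm_num
    _ ≤ (1 / 2) ^ k * dimR n := by gcongr; exact dimR_mono h

lemma three_mul_half_pow_le {k : ℕ} (hk : 1 ≤ k) : 3 * (1 / 2 : ℝ) ^ k ≤ 2 * (3 / 4) ^ k := by
  linarith [half_pow_le hk]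

lemma three_quarters_pow_le {k : ℕ} (hk : 1 ≤ k) : (3 / 4 : ℝ) ^ k ≤ 3 / 4 :=
  pow_le_of_le_one (by norm_num) (by norm_num) (by omega)

lemma alphaCoef_eq_alphaRat (n k : ℕ) :
    alphaCoef n k = alphaRat (dimR n) ((3 / 4) ^ k) ((1 / 2) ^ k) := rfl

lemma betaCoef_eq_betaRat {n : ℕ} (hn : n ≠ 1) (k : ℕ) :
    betaCoef n k = betaRat (dimR n) ((3 / 4) ^ k) := by
  rw [betaCoef, if_neg hn, betaRat]

lemma alphaCoef_one {n : ℕ} (hn : 1 ≤ n) :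
    alphaCoef n 1 = 3 / 4 - (3 * dimR n + 1) / (4 * (dimR n ^ 2 - 1)) := by
  rw [alphaCoef_eq_alphaRat, pow_one, pow_one]
  exact alphaRat_three_quarters_half (by linarith [two_le_dimR hn])

lemma betaCoef_one {n : ℕ} (hn : 1 ≤ n) :
    betaCoef n 1 = 3 / 4 - 1 / (4 * (dimR n ^ 2 - 1)) := by
  rcases hn.eq_or_lt with rfl | hn
  · norm_num [betaCoef, dimR]
  · rw [betaCoef_eq_betaRat hn.ne', pow_one]
    exact betaRat_three_quarters (by linarith [four_le_dimR hn])

lemma alphaCoef_monotoneOn {k : ℕ} (hk : 1 ≤ k) :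
    MonotoneOn (fun n => alphaCoef n k) (Set.Ici 1) := fun a ha b hb hab =>
  alphaRat_monotoneOn (by positivity) (three_mul_half_pow_le hk) (three_quarters_pow_le hk)
    (show 1 < dimR a by linarith [two_le_dimR ha]) (show 1 < dimR b by linarith [two_le_dimR hb])
    (dimR_mono hab)

lemma betaCoef_monotoneOn {k : ℕ} (hk : 1 ≤ k) :
    MonotoneOn (fun n => betaCoef n k) (Set.Ici k) := by
  intro a ha b hb hab
  rcases hk.eq_or_lt with rfl | hk
  · have := two_le_dimR ha
    simp only [betaCoef_one ha, betaCoef_one hb]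
    gcongr
    · nlinarith
    · exact dimR_mono hab
  · have ha : 2 ≤ a := hk.trans_le ha
    simp only [betaCoef_eq_betaRat (show a ≠ 1 by omega), betaCoef_eq_betaRat (show b ≠ 1 by omega)]
    exact betaRat_monotoneOn (by positivity) (three_quarters_pow_le hk.le)
      (show 2 < dimR a by linarith [four_le_dimR ha])
      (show 2 < dimR b by linarith [four_le_dimR (ha.trans hab)]) (dimR_mono hab)

lemma alphaCoef_antitone {n : ℕ} (hn : 1 ≤ n) : Antitone (fun k => alphaCoef n k) :=
  fun _ _ h => alphaRat_le_alphaRat (by linarith [two_le_dimR hn])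
    (pow_le_pow_of_le_one (by norm_num) (by norm_num) h)
    (pow_le_pow_of_le_one (by norm_num) (by norm_num) h)

lemma betaCoef_antitone {n : ℕ} (hn : 1 ≤ n) : Antitone (fun k => betaCoef n k) := by
  intro _ _ h
  rcases hn.eq_or_lt with rfl | hn
  · simp [betaCoef]
  · simp only [betaCoef_eq_betaRat hn.ne']
    exact betaRat_le_betaRat (by linarith [four_le_dimR hn])
      (pow_le_pow_of_le_one (by norm_num) (by norm_num) h)

lemma alphaCoef_pos {n k : ℕ} (hk : 1 ≤ k) (hkn : k ≤ n) : 0 < alphaCoef n k :=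
  alphaRat_pos (two_le_dimR (hk.trans hkn)) (three_halves_le_mul_dimR hk hkn)
    (one_le_half_pow_mul_dimR hkn)

lemma alphaCoef_lt {n k : ℕ} (hk : 1 ≤ k) (hn : 1 ≤ n) : alphaCoef n k < (3 / 4) ^ k :=
  alphaRat_lt (by linarith [two_le_dimR hn]) (by positivity) (three_mul_half_pow_le hk)
    (three_quarters_pow_le hk)

lemma betaCoef_pos {n k : ℕ} (hk : 1 ≤ k) (hkn : k ≤ n) : 0 < betaCoef n k := by
  rcases (hk.trans hkn).eq_or_lt with rfl | hn
  · norm_num [betaCoef, dimR]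
  · have hd := four_le_dimR hn
    rw [betaCoef_eq_betaRat hn.ne']
    exact betaRat_pos (by linarith) (by nlinarith [three_halves_le_mul_dimR hk hkn])

lemma betaCoef_lt {n k : ℕ} (hk : 1 ≤ k) (hkn : k ≤ n) : betaCoef n k < (3 / 4) ^ k := by
  rcases (hk.trans hkn).eq_or_lt with rfl | hn
  · obtain rfl : k = 1 := by omega
    norm_num [betaCoef, dimR]
  · rw [betaCoef_eq_betaRat hn.ne']
    exact betaRat_lt (by linarith [four_le_dimR hn]) (by positivity) (three_quarters_pow_le hk)

lemma alphaCoef_le_betaCoef {n k : ℕ} (hk : 1 ≤ k) (hkn : k ≤ n) :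
    alphaCoef n k ≤ betaCoef n k := by
  rcases (hk.trans hkn).eq_or_lt with rfl | hn
  · obtain rfl : k = 1 := by omega
    norm_num [alphaCoef, betaCoef, dimR]
  · rw [betaCoef_eq_betaRat hn.ne']
    exact alphaRat_le_betaRat (by linarith [four_le_dimR hn]) (three_mul_half_pow_le hk)
      (three_halves_le_mul_dimR hk hkn)

lemma alphaCoef_one_mul_le {n k : ℕ} (hk : 1 ≤ k) (hkn : k + 1 ≤ n) :
    alphaCoef n 1 * alphaCoef n k ≤ alphaCoef n (k + 1) := by
  have hd : 4 ≤ dimR n := four_le_dimR (by omega)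
  rw [alphaCoef_eq_alphaRat, alphaCoef_eq_alphaRat, alphaCoef_eq_alphaRat, pow_one, pow_one,
    pow_succ', pow_succ']
  refine alphaRat_mul_le (by linarith) ?_
  rcases hk.eq_or_lt with rfl | hk
  · norm_num
    nlinarith
  · have hy := half_pow_le hk
    have hgd := three_halves_pow_mul_two_pow_le (j := 1) hkn
    have : (9 / 4 : ℝ) ≤ (3 / 2) ^ k := by
      calc (9 / 4 : ℝ) = (3 / 2) ^ 2 := by norm_num
        _ ≤ (3 / 2) ^ k := pow_le_pow_right₀ (by norm_num) hk
    norm_num at hy hgd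
    nlinarith [mul_le_mul_of_nonneg_right hy
        (by nlinarith : (0 : ℝ) ≤ 3 * dimR n * (dimR n ^ 2 - 3 * dimR n - 2)),
      mul_le_mul_of_nonneg_right hgd (by positivity : (0 : ℝ) ≤ dimR n * (3 * dimR n + 1))]

lemma alphaCoef_one_pow_le {n k : ℕ} (hk : 1 ≤ k) (hkn : k ≤ n) :
    alphaCoef n 1 ^ k ≤ alphaCoef n k := by
  induction k, hk using Nat.le_induction with
  | base => rw [pow_one]
  | succ k hk ih =>
    calc alphaCoef n 1 ^ (k + 1) = alphaCoef n 1 * alphaCoef n 1 ^ k := pow_succ' _ _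
      _ ≤ alphaCoef n 1 * alphaCoef n k := by
          gcongr
          exacts [(alphaCoef_pos le_rfl (by omega)).le, ih (by omega)]
      _ ≤ alphaCoef n (k + 1) := alphaCoef_one_mul_le hk hkn

lemma betaCoef_le_one_mul {n k : ℕ} (hk : 1 ≤ k) (hkn : k + 1 ≤ n) :
    betaCoef n (k + 1) ≤ betaCoef n 1 * betaCoef n k := by
  have hn : n ≠ 1 := by omega
  rw [betaCoef_eq_betaRat hn, betaCoef_eq_betaRat hn, betaCoef_eq_betaRat hn, pow_one, pow_succ']
  exact betaRat_le_mul (by linarith [four_le_dimR (show 2 ≤ n by omega)]) (three_quarters_pow_le hk)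

lemma betaCoef_le_one_pow {n k : ℕ} (hk : 1 ≤ k) (hkn : k ≤ n) :
    betaCoef n k ≤ betaCoef n 1 ^ k := by
  induction k, hk using Nat.le_induction with
  | base => rw [pow_one]
  | succ k hk ih =>
    calc betaCoef n (k + 1) ≤ betaCoef n 1 * betaCoef n k := betaCoef_le_one_mul hk hkn
      _ ≤ betaCoef n 1 * betaCoef n 1 ^ k := by
          gcongr
          exacts [(betaCoef_pos le_rfl (by omega)).le, ih (by omega)]
      _ = betaCoef n 1 ^ (k + 1) := (pow_succ' _ _).symm

lemma pow_mul_one_sub_le_alphaCoef_one_pow {n : ℕ} (hn : 1 ≤ n) (m : ℕ) :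
    (3 / 4 : ℝ) ^ m * (1 - m * (3 * dimR n + 1) / (3 * (dimR n ^ 2 - 1))) ≤ alphaCoef n 1 ^ m := by
  have hd := two_le_dimR hn
  have hd₁ : 0 < dimR n ^ 2 - 1 := by nlinarith
  set x := (3 * dimR n + 1) / (3 * (dimR n ^ 2 - 1)) with hx
  have hx₂ : x ≤ 2 := by
    rw [hx, div_le_iff₀ (by positivity)]
    nlinarith
  have hα : alphaCoef n 1 = 3 / 4 * (1 + -x) := by
    rw [alphaCoef_one hn, hx]
    field_simp
    ring
  calc (3 / 4 : ℝ) ^ m * (1 - m * (3 * dimR n + 1) / (3 * (dimR n ^ 2 - 1)))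
      = (3 / 4) ^ m * (1 + m * -x) := by rw [hx]; ring
    _ ≤ (3 / 4) ^ m * (1 + -x) ^ m := by
        gcongr
        exact one_add_mul_le_pow (by linarith) m
    _ = alphaCoef n 1 ^ m := by rw [hα, mul_pow]

lemma betaCoef_one_pow_le {n : ℕ} (hn : 1 ≤ n) (m : ℕ) :
    betaCoef n 1 ^ m ≤ alphaCoef n 1 ^ m + m * dimR n / (dimR n ^ 2 - 1) * (3 / 4) ^ m := by
  have hβ : betaCoef n 1 ≤ 3 / 4 := by simpa using (betaCoef_lt le_rfl hn).le
  have key := mul_pow_sub_pow_le (alphaCoef_pos le_rfl hn).le (alphaCoef_le_betaCoef le_rfl hn) hβ m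
  have hd₁ : dimR n ^ 2 - 1 ≠ 0 := by nlinarith [two_le_dimR hn]
  have hdiff : m * (3 / 4 : ℝ) ^ m * (betaCoef n 1 - alphaCoef n 1)
      = 3 / 4 * (m * dimR n / (dimR n ^ 2 - 1) * (3 / 4) ^ m) := by
    rw [alphaCoef_one hn, betaCoef_one hn]
    field_simp
    ring
  linarith

lemma tendsto_of_eventually_eq_comp_inv_dimR {u : ℕ → ℝ} {f : ℝ → ℝ} {L : ℝ}
    (hf : ContinuousAt f 0) (hL : f 0 = L) (hu : ∀ᶠ n in atTop, f (dimR n)⁻¹ = u n) :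
    Tendsto u atTop (𝓝 L) :=
  hL ▸ (hf.tendsto.comp (tendsto_pow_atTop_atTop_of_one_lt one_lt_two).inv_tendsto_atTop).congr' hu

lemma tendsto_alphaCoef (k : ℕ) : Tendsto (fun n => alphaCoef n k) atTop (𝓝 ((3 / 4) ^ k)) := by
  -- `alphaCoef n k` with numerator and denominator divided by `d⁴`, as a function of `u = 1/d`
  have hf : ContinuousAt (fun u : ℝ => ((1 + 3 * u) * ((3 / 4) ^ k + 3 * (1 / 2) ^ k * u)
      - 4 * u ^ 2 * (1 + u) * (1 + 2 * u)) / ((1 - u ^ 2) * (1 + 2 * u) * (1 + 4 * u))) 0 :=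
    ContinuousAt.div (by fun_prop) (by fun_prop) (by norm_num)
  refine tendsto_of_eventually_eq_comp_inv_dimR hf (by norm_num) ?_
  filter_upwards [eventually_ge_atTop 1] with n hn
  have hd := two_le_dimR hn
  have : dimR n ^ 2 - 1 ≠ 0 := by nlinarith
  have : dimR n + 2 ≠ 0 := by linarith
  have : dimR n + 4 ≠ 0 := by linarith
  rw [alphaCoef]
  field_simp

lemma tendsto_betaCoef (k : ℕ) : Tendsto (fun n => betaCoef n k) atTop (𝓝 ((3 / 4) ^ k)) := by
  have hf : ContinuousAt (fun u : ℝ => ((3 / 4) ^ k - 4 * u ^ 2 + 4 * u ^ 4)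
      / ((1 - u ^ 2) * (1 - 4 * u ^ 2))) 0 :=
    ContinuousAt.div (by fun_prop) (by fun_prop) (by norm_num)
  refine tendsto_of_eventually_eq_comp_inv_dimR hf (by norm_num) ?_
  filter_upwards [eventually_ge_atTop 2] with n hn
  have hd := four_le_dimR hn
  have : dimR n ^ 2 - 1 ≠ 0 := by nlinarith
  have : dimR n ^ 2 - 4 ≠ 0 := by nlinarith
  rw [betaCoef_eq_betaRat (by omega), betaRat]
  field_simp

/-- properties of the decay coefficients `α_k` and `β_k`. -/
theorem alpha_beta_coef_properties (k : ℕ) (hk : 1 ≤ k) :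
    -- (i) monotonically increasing in `d` (over `d = 2^n` with `n ≥ k`)
    (∀ n₁ n₂ : ℕ, k ≤ n₁ → n₁ ≤ n₂ →
      alphaCoef n₁ k ≤ alphaCoef n₂ k ∧ betaCoef n₁ k ≤ betaCoef n₂ k)
    -- (i) monotonically decreasing in `k`
    ∧ (∀ (n k₁ k₂ : ℕ), 1 ≤ k₁ → k₁ ≤ k₂ → k₂ ≤ n →
        alphaCoef n k₂ ≤ alphaCoef n k₁ ∧ betaCoef n k₂ ≤ betaCoef n k₁)
    -- (ii) limits as `d → ∞` and bounds
    ∧ Tendsto (fun n : ℕ => alphaCoef n k) atTop (𝓝 ((3 / 4 : ℝ) ^ k))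
    ∧ Tendsto (fun n : ℕ => betaCoef n k) atTop (𝓝 ((3 / 4 : ℝ) ^ k))
    ∧ (∀ n : ℕ, k ≤ n →
        0 < alphaCoef n k ∧ alphaCoef n k < (3 / 4 : ℝ) ^ k
        ∧ 0 < betaCoef n k ∧ betaCoef n k < (3 / 4 : ℝ) ^ k)
    -- (iii) the chain of inequalities
    ∧ (∀ n : ℕ, k ≤ n → ∀ l : ℕ,
        ((3 / 4 : ℝ) ^ (k * l) *
            (1 - (k * l * (3 * dimR n + 1)) / (3 * ((dimR n) ^ 2 - 1)))
          ≤ (alphaCoef n 1) ^ (k * l))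
        ∧ (alphaCoef n 1) ^ (k * l) ≤ (alphaCoef n k) ^ l
        ∧ (alphaCoef n k) ^ l ≤ (betaCoef n k) ^ l
        ∧ (betaCoef n k) ^ l ≤ (betaCoef n 1) ^ (k * l)
        ∧ (betaCoef n 1) ^ (k * l)
            ≤ (alphaCoef n 1) ^ (k * l)
              + (k * l * dimR n / ((dimR n) ^ 2 - 1)) * (3 / 4 : ℝ) ^ (k * l)) := by
  refine ⟨fun n₁ n₂ hkn h => ?_, fun n k₁ k₂ hk₁ h hn => ?_, tendsto_alphaCoef k,
    tendsto_betaCoef k, fun n hkn => ?_, fun n hkn l => ?_⟩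
  · have hn₁ : 1 ≤ n₁ := hk.trans hkn
    exact ⟨alphaCoef_monotoneOn hk hn₁ (hn₁.trans h) h,
      betaCoef_monotoneOn hk hkn (hkn.trans h) h⟩
  · have hn : 1 ≤ n := hk₁.trans (h.trans hn)
    exact ⟨alphaCoef_antitone hn h, betaCoef_antitone hn h⟩
  · exact ⟨alphaCoef_pos hk hkn, alphaCoef_lt hk (hk.trans hkn), betaCoef_pos hk hkn,
      betaCoef_lt hk hkn⟩
  have hn : 1 ≤ n := hk.trans hkn
  refine ⟨?_, ?_, pow_le_pow_left₀ (alphaCoef_pos hk hkn).le (alphaCoef_le_betaCoef hk hkn) l,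
    ?_, ?_⟩
  · exact_mod_cast pow_mul_one_sub_le_alphaCoef_one_pow hn (k * l)
  · rw [pow_mul]
    exact pow_le_pow_left₀ (pow_nonneg (alphaCoef_pos le_rfl hn).le k)
      (alphaCoef_one_pow_le hk hkn) l
  · rw [pow_mul]
    exact pow_le_pow_left₀ (betaCoef_pos hk hkn).le (betaCoef_le_one_pow hk hkn) l
  · exact_mod_cast betaCoef_one_pow_le hn (k * l)

end ThriftyShadow
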